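/- arXiv:2209.07146 — 7 statements merged into one kernel-verified Lean document; each statement's English description precedes it below -/
import Mathlib

section
/- Let Ŷ be any n×T real matrix of base forecasts and let Ỹ = M_cs · Ŷ · M_teᵀ be the sequentially reconciled forecasts. Then Ỹ is cross-temporally coherent: Uᵀ · Ỹ = 0 (the n_a×T zero matrix) and Ỹ · Z = 0 (the n×k zero matrix). -/
open Matrix

/-- the sequentially reconciled forecasts Ỹ = M_cs · Ŷ · M_teᵀ are
cross-temporally coherent: Uᵀ·Ỹ = 0 and Ỹ·Z = 0. -/
theorem stmt_1 {n na T k : ℕ}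
    (W : Matrix (Fin n) (Fin n) ℝ) (hW : W.PosDef)
    (U : Matrix (Fin n) (Fin na) ℝ) (hU : IsUnit (Uᵀ * W * U))
    (Ω : Matrix (Fin T) (Fin T) ℝ) (hΩ : Ω.PosDef)
    (Z : Matrix (Fin T) (Fin k) ℝ) (hZ : IsUnit (Zᵀ * Ω * Z))
    (Mcs : Matrix (Fin n) (Fin n) ℝ) (hMcs : Mcs = 1 - W * U * (Uᵀ * W * U)⁻¹ * Uᵀ)
    (Mte : Matrix (Fin T) (Fin T) ℝ) (hMte : Mte = 1 - Ω * Z * (Zᵀ * Ω * Z)⁻¹ * Zᵀ)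
    (Yhat : Matrix (Fin n) (Fin T) ℝ)
    (Ytilde : Matrix (Fin n) (Fin T) ℝ) (hYtilde : Ytilde = Mcs * Yhat * Mteᵀ) :
    Uᵀ * Ytilde = 0 ∧ Ytilde * Z = 0 := by
  have hUM : Uᵀ * Mcs = 0 := by
    rw [hMcs, Matrix.mul_sub, Matrix.mul_one]
    have : Uᵀ * (W * U * (Uᵀ * W * U)⁻¹ * Uᵀ)
        = (Uᵀ * W * U) * (Uᵀ * W * U)⁻¹ * Uᵀ := by
      simp only [Matrix.mul_assoc]
    rw [this, Matrix.mul_nonsing_inv _ ((Matrix.isUnit_iff_isUnit_det _).mp hU),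
      Matrix.one_mul, sub_self]
  have hMZ : Mteᵀ * Z = 0 := by
    rw [hMte, Matrix.transpose_sub, Matrix.transpose_one, Matrix.sub_mul,
      Matrix.one_mul]
    have hΩs : Ωᵀ = Ω := hΩ.1.eq
    have hinv : ((Zᵀ * (Ω * Z))⁻¹)ᵀ = (Zᵀ * (Ω * Z))⁻¹ := by
      rw [Matrix.transpose_nonsing_inv]
      congr 1
      calc (Zᵀ * (Ω * Z))ᵀ = Zᵀ * (Ωᵀ * Z) := by
            simp [Matrix.transpose_mul, Matrix.mul_assoc]
        _ = Zᵀ * (Ω * Z) := by rw [hΩs]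
    have : (Ω * Z * (Zᵀ * Ω * Z)⁻¹ * Zᵀ)ᵀ * Z
        = Z * ((Zᵀ * Ω * Z)⁻¹ * (Zᵀ * Ω * Z)) := by
      simp only [Matrix.transpose_mul, hinv, Matrix.transpose_transpose, hΩs,
        Matrix.mul_assoc]
    rw [this, Matrix.nonsing_inv_mul _ ((Matrix.isUnit_iff_isUnit_det _).mp hZ),
      Matrix.mul_one, sub_self]
  constructor
  · rw [hYtilde, ← Matrix.mul_assoc, ← Matrix.mul_assoc, hUM, Matrix.zero_mul,
      Matrix.zero_mul]
  · rw [hYtilde, Matrix.mul_assoc, hMZ, Matrix.mul_zero]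
end

section
/- Let H be a c×(nT) real matrix whose kernel (as a linear map on ℝ^{nT}) equals { v ∈ ℝ^{nT} : (Uᵀ ⊗ I_T)·v = 0 and (I_n ⊗ Zᵀ)·v = 0 }, and suppose H·(W ⊗ Ω)·Hᵀ is invertible. Then the optimal combination cross-temporal reconciliation projector with separable covariance matrix Ω_ct = W ⊗ Ω equals the Kronecker product of the two unidimensional reconciliation projectors: I_{nT} − (W ⊗ Ω)·Hᵀ·(H·(W ⊗ Ω)·Hᵀ)⁻¹·H = M_cs ⊗ M_te. In particular, the sequential (cross-sectional and temporal) reconciled forecasts coincide with the optimal combination cross-temporal reconciled forecasts with covariance W ⊗ Ω. -/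
open Matrix Kronecker

private lemma sub_kron {l m p q : Type*} (A B : Matrix l m ℝ) (C : Matrix p q ℝ) :
    (A - B) ⊗ₖ C = A ⊗ₖ C - B ⊗ₖ C := by
  ext ⟨i, i'⟩ ⟨j, j'⟩
  simp [sub_mul]

private lemma kron_sub {l m p q : Type*} (A : Matrix l m ℝ) (B C : Matrix p q ℝ) :
    A ⊗ₖ (B - C) = A ⊗ₖ B - A ⊗ₖ C := by
  ext ⟨i, i'⟩ ⟨j, j'⟩
  simp [mul_sub]

private lemma mul_eq_zero_iff_cols {l m o : Type*} [Fintype m] (M : Matrix l m ℝ)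
    (X : Matrix m o ℝ) :
    M * X = 0 ↔ ∀ j, M.mulVec (fun i => X i j) = 0 := by
  constructor
  · intro h j
    ext i
    have := congrFun (congrFun h i) j
    simpa [Matrix.mul_apply, Matrix.mulVec, dotProduct] using this
  · intro h
    ext i j
    have := congrFun (h j) i
    simpa [Matrix.mul_apply, Matrix.mulVec, dotProduct] using this

/-- for any full-row-rank constraint matrix H whose kernel is the
cross-temporally coherent subspace, the optimal combination cross-temporal
reconciliation projector with separable covariance W ⊗ Ω equals the Kronecker
product M_cs ⊗ M_te of the unidimensional projectors; in particular the
sequential reconciled forecasts coincide with the optimal combination ones. -/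
theorem stmt_4 {n na T k c : ℕ}
    (W : Matrix (Fin n) (Fin n) ℝ) (hW : W.PosDef)
    (U : Matrix (Fin n) (Fin na) ℝ) (hU : IsUnit (Uᵀ * W * U))
    (Ω : Matrix (Fin T) (Fin T) ℝ) (hΩ : Ω.PosDef)
    (Z : Matrix (Fin T) (Fin k) ℝ) (hZ : IsUnit (Zᵀ * Ω * Z))
    (Mcs : Matrix (Fin n) (Fin n) ℝ) (hMcs : Mcs = 1 - W * U * (Uᵀ * W * U)⁻¹ * Uᵀ)
    (Mte : Matrix (Fin T) (Fin T) ℝ) (hMte : Mte = 1 - Ω * Z * (Zᵀ * Ω * Z)⁻¹ * Zᵀ)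
    (H : Matrix (Fin c) (Fin n × Fin T) ℝ)
    (hHker : ∀ v : Fin n × Fin T → ℝ,
      H.mulVec v = 0 ↔
        ((Uᵀ ⊗ₖ (1 : Matrix (Fin T) (Fin T) ℝ)).mulVec v = 0 ∧
          (((1 : Matrix (Fin n) (Fin n) ℝ)) ⊗ₖ Zᵀ).mulVec v = 0))
    (hHW : IsUnit (H * (W ⊗ₖ Ω) * Hᵀ)) :
    (1 : Matrix (Fin n × Fin T) (Fin n × Fin T) ℝ)
        - (W ⊗ₖ Ω) * Hᵀ * (H * (W ⊗ₖ Ω) * Hᵀ)⁻¹ * H = Mcs ⊗ₖ Mte ∧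
      ∀ yhat : Fin n × Fin T → ℝ,
        ((1 : Matrix (Fin n × Fin T) (Fin n × Fin T) ℝ)
          - (W ⊗ₖ Ω) * Hᵀ * (H * (W ⊗ₖ Ω) * Hᵀ)⁻¹ * H).mulVec yhat
          = (Mcs ⊗ₖ Mte).mulVec yhat := by
  have hWs : Wᵀ = W := by
    rw [← Matrix.conjTranspose_eq_transpose_of_trivial]; exact hW.1
  have hΩs : Ωᵀ = Ω := by
    rw [← Matrix.conjTranspose_eq_transpose_of_trivial]; exact hΩ.1
  -- inverse facts
  have hSdet : IsUnit (H * (W ⊗ₖ Ω) * Hᵀ).det :=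
    (Matrix.isUnit_iff_isUnit_det _).mp hHW
  have hSK : (H * (W ⊗ₖ Ω) * Hᵀ) * (H * (W ⊗ₖ Ω) * Hᵀ)⁻¹ = 1 :=
    Matrix.mul_nonsing_inv _ hSdet
  have hKS : (H * (W ⊗ₖ Ω) * Hᵀ)⁻¹ * (H * (W ⊗ₖ Ω) * Hᵀ) = 1 :=
    Matrix.nonsing_inv_mul _ hSdet
  have hUdet : IsUnit (Uᵀ * W * U).det := (Matrix.isUnit_iff_isUnit_det _).mp hU
  have hZdet : IsUnit (Zᵀ * Ω * Z).det := (Matrix.isUnit_iff_isUnit_det _).mp hZ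
  have hUU : (Uᵀ * W * U) * (Uᵀ * W * U)⁻¹ = 1 := Matrix.mul_nonsing_inv _ hUdet
  have hZZ : (Zᵀ * Ω * Z) * (Zᵀ * Ω * Z)⁻¹ = 1 := Matrix.mul_nonsing_inv _ hZdet
  set K := (H * (W ⊗ₖ Ω) * Hᵀ)⁻¹ with hK
  set P := (1 : Matrix (Fin n × Fin T) (Fin n × Fin T) ℝ)
      - (W ⊗ₖ Ω) * Hᵀ * K * H with hPdef
  set Q := Mcs ⊗ₖ Mte with hQdef
  -- H * P = 0
  have hHP : H * P = 0 := by
    rw [hPdef, Matrix.mul_sub, Matrix.mul_one]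
    simp only [← Matrix.mul_assoc]
    rw [Matrix.mul_assoc (H * (W ⊗ₖ Ω) * Hᵀ) K H, ← Matrix.mul_assoc, hSK, Matrix.one_mul,
      sub_self]
  -- P * ((W⊗Ω) * Hᵀ) = 0
  have hPOH : P * ((W ⊗ₖ Ω) * Hᵀ) = 0 := by
    rw [hPdef, Matrix.sub_mul, Matrix.one_mul]
    have : (W ⊗ₖ Ω) * Hᵀ * K * H * ((W ⊗ₖ Ω) * Hᵀ)
        = (W ⊗ₖ Ω) * Hᵀ * (K * (H * (W ⊗ₖ Ω) * Hᵀ)) := by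
      simp only [Matrix.mul_assoc]
    rw [this, hKS, Matrix.mul_one, sub_self]
  -- kernel characterization at the matrix level
  have hkerM : ∀ X : Matrix (Fin n × Fin T) (Fin n × Fin T) ℝ,
      H * X = 0 ↔
        ((Uᵀ ⊗ₖ (1 : Matrix (Fin T) (Fin T) ℝ)) * X = 0 ∧
          ((1 : Matrix (Fin n) (Fin n) ℝ) ⊗ₖ Zᵀ) * X = 0) := by
    intro X
    simp only [mul_eq_zero_iff_cols, ← forall_and]
    exact forall_congr' fun j => hHker _
  -- Uᵀ * Mcs = 0, Zᵀ * Mte = 0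
  have hUMcs : Uᵀ * Mcs = 0 := by
    rw [hMcs, Matrix.mul_sub, Matrix.mul_one]
    simp only [← Matrix.mul_assoc]
    rw [hUU, Matrix.one_mul, sub_self]
  have hZMte : Zᵀ * Mte = 0 := by
    rw [hMte, Matrix.mul_sub, Matrix.mul_one]
    simp only [← Matrix.mul_assoc]
    rw [hZZ, Matrix.one_mul, sub_self]
  -- H * Q = 0
  have hN1Q : (Uᵀ ⊗ₖ (1 : Matrix (Fin T) (Fin T) ℝ)) * Q = 0 := by
    rw [hQdef, ← Matrix.mul_kronecker_mul, hUMcs, Matrix.zero_kronecker]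
  have hN2Q : ((1 : Matrix (Fin n) (Fin n) ℝ) ⊗ₖ Zᵀ) * Q = 0 := by
    rw [hQdef, ← Matrix.mul_kronecker_mul, hZMte, Matrix.kronecker_zero]
  have hHQ : H * Q = 0 := (hkerM Q).mpr ⟨hN1Q, hN2Q⟩
  -- Q is (W⊗Ω)-self-adjoint
  have hUWUs : (Uᵀ * W * U)ᵀ = Uᵀ * W * U := by
    simp [Matrix.transpose_mul, Matrix.mul_assoc, hWs]
  have hZΩZs : (Zᵀ * Ω * Z)ᵀ = Zᵀ * Ω * Z := by
    simp [Matrix.transpose_mul, Matrix.mul_assoc, hΩs]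
  have hMcsW : Mcs * W = W * Mcsᵀ := by
    rw [hMcs]
    simp only [Matrix.sub_mul, Matrix.mul_sub, Matrix.one_mul, Matrix.mul_one,
      Matrix.transpose_sub, Matrix.transpose_mul, Matrix.transpose_one,
      Matrix.transpose_transpose, Matrix.transpose_nonsing_inv, hUWUs, hWs]
    simp [Matrix.mul_assoc]
  have hMteΩ : Mte * Ω = Ω * Mteᵀ := by
    rw [hMte]
    simp only [Matrix.sub_mul, Matrix.mul_sub, Matrix.one_mul, Matrix.mul_one,
      Matrix.transpose_sub, Matrix.transpose_mul, Matrix.transpose_one,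
      Matrix.transpose_transpose, Matrix.transpose_nonsing_inv, hZΩZs, hΩs]
    simp [Matrix.mul_assoc]
  have hQΩ : Q * (W ⊗ₖ Ω) = (W ⊗ₖ Ω) * Qᵀ := by
    rw [hQdef, ← Matrix.mul_kronecker_mul, hMcsW, hMteΩ, Matrix.mul_kronecker_mul,
      Matrix.kroneckerMap_transpose]
  have hQOH : Q * ((W ⊗ₖ Ω) * Hᵀ) = 0 := by
    rw [← Matrix.mul_assoc, hQΩ, Matrix.mul_assoc, ← Matrix.transpose_mul, hHQ,
      Matrix.transpose_zero, Matrix.mul_zero]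
  -- Q acts as the identity on the kernel of H
  have hQX : ∀ X : Matrix (Fin n × Fin T) (Fin n × Fin T) ℝ,
      (Uᵀ ⊗ₖ (1 : Matrix (Fin T) (Fin T) ℝ)) * X = 0 →
      ((1 : Matrix (Fin n) (Fin n) ℝ) ⊗ₖ Zᵀ) * X = 0 → Q * X = X := by
    intro X h1 h2
    have hQexp : Q = 1 - (W * U * (Uᵀ * W * U)⁻¹ * Uᵀ) ⊗ₖ (1 : Matrix (Fin T) (Fin T) ℝ)
        - (1 : Matrix (Fin n) (Fin n) ℝ) ⊗ₖ (Ω * Z * (Zᵀ * Ω * Z)⁻¹ * Zᵀ)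
        + (W * U * (Uᵀ * W * U)⁻¹ * Uᵀ) ⊗ₖ (Ω * Z * (Zᵀ * Ω * Z)⁻¹ * Zᵀ) := by
      rw [hQdef, hMcs, hMte, sub_kron, kron_sub, kron_sub, Matrix.one_kronecker_one]
      abel
    have e1 : ((W * U * (Uᵀ * W * U)⁻¹ * Uᵀ) ⊗ₖ (1 : Matrix (Fin T) (Fin T) ℝ)) * X = 0 := by
      have : (W * U * (Uᵀ * W * U)⁻¹ * Uᵀ) ⊗ₖ (1 : Matrix (Fin T) (Fin T) ℝ)
          = ((W * U * (Uᵀ * W * U)⁻¹) ⊗ₖ (1 : Matrix (Fin T) (Fin T) ℝ))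
            * (Uᵀ ⊗ₖ (1 : Matrix (Fin T) (Fin T) ℝ)) := by
        rw [← Matrix.mul_kronecker_mul, Matrix.one_mul]
      rw [this, Matrix.mul_assoc, h1, Matrix.mul_zero]
    have e2 : ((1 : Matrix (Fin n) (Fin n) ℝ) ⊗ₖ (Ω * Z * (Zᵀ * Ω * Z)⁻¹ * Zᵀ)) * X = 0 := by
      have : (1 : Matrix (Fin n) (Fin n) ℝ) ⊗ₖ (Ω * Z * (Zᵀ * Ω * Z)⁻¹ * Zᵀ)
          = ((1 : Matrix (Fin n) (Fin n) ℝ) ⊗ₖ (Ω * Z * (Zᵀ * Ω * Z)⁻¹))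
            * ((1 : Matrix (Fin n) (Fin n) ℝ) ⊗ₖ Zᵀ) := by
        rw [← Matrix.mul_kronecker_mul, Matrix.one_mul]
      rw [this, Matrix.mul_assoc, h2, Matrix.mul_zero]
    have e3 : ((W * U * (Uᵀ * W * U)⁻¹ * Uᵀ) ⊗ₖ (Ω * Z * (Zᵀ * Ω * Z)⁻¹ * Zᵀ)) * X = 0 := by
      have : (W * U * (Uᵀ * W * U)⁻¹ * Uᵀ) ⊗ₖ (Ω * Z * (Zᵀ * Ω * Z)⁻¹ * Zᵀ)
          = ((W * U * (Uᵀ * W * U)⁻¹ * Uᵀ) ⊗ₖ (Ω * Z * (Zᵀ * Ω * Z)⁻¹))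
            * ((1 : Matrix (Fin n) (Fin n) ℝ) ⊗ₖ Zᵀ) := by
        rw [← Matrix.mul_kronecker_mul, Matrix.mul_one]
      rw [this, Matrix.mul_assoc, h2, Matrix.mul_zero]
    rw [hQexp]
    simp only [Matrix.sub_mul, Matrix.add_mul, Matrix.one_mul, e1, e2, e3]
    abel
  -- Q * P = P
  have hQP : Q * P = P := by
    obtain ⟨h1, h2⟩ := (hkerM P).mp hHP
    exact hQX P h1 h2
  -- P * P = P
  have hPs : P * ((W ⊗ₖ Ω) * Hᵀ * K * H) = 0 := by
    have : (W ⊗ₖ Ω) * Hᵀ * K * H = ((W ⊗ₖ Ω) * Hᵀ) * (K * H) := by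
      simp only [Matrix.mul_assoc]
    rw [this, ← Matrix.mul_assoc, hPOH, Matrix.zero_mul]
  have hQs : Q * ((W ⊗ₖ Ω) * Hᵀ * K * H) = 0 := by
    have : (W ⊗ₖ Ω) * Hᵀ * K * H = ((W ⊗ₖ Ω) * Hᵀ) * (K * H) := by
      simp only [Matrix.mul_assoc]
    rw [this, ← Matrix.mul_assoc, hQOH, Matrix.zero_mul]
  have hPP : P * P = P := by
    nth_rewrite 2 [hPdef]
    rw [Matrix.mul_sub, Matrix.mul_one, hPs, sub_zero]
  -- conclude P = Q
  have hPQ : P = Q := by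
    have hsum : P + (W ⊗ₖ Ω) * Hᵀ * K * H = 1 := by
      rw [hPdef, sub_add_cancel]
    have : P - Q = (P - Q) * (P + (W ⊗ₖ Ω) * Hᵀ * K * H) := by
      rw [hsum, Matrix.mul_one]
    rw [Matrix.sub_mul, Matrix.mul_add, Matrix.mul_add, hPP, hQP, hPs, hQs] at this
    have h0 : P - Q = 0 := by rw [this]; abel
    exact sub_eq_zero.mp h0
  exact ⟨hPQ, fun yhat => by rw [hPQ]⟩
end

section
/- A vector v ∈ ℝ^{nT} is a fixed point of the Kronecker projector M_cs ⊗ M_te if and only if it is cross-temporally coherent: (M_cs ⊗ M_te)·v = v if and only if (Uᵀ ⊗ I_T)·v = 0 and (I_n ⊗ Zᵀ)·v = 0. -/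
open Matrix Kronecker

/-! Both projectors have the form `1 - A * B` with `B * A = 1` (for `M_cs`, `B = Uᵀ` and
`A = W U (Uᵀ W U)⁻¹`), so `B` annihilates them, which gives the forward direction. Conversely,
`M_cs ⊗ M_te = (M_cs ⊗ 1) * (1 ⊗ M_te)`, and `1 - A * B` fixes every vector killed by `B`. -/

namespace Matrix

variable {R : Type*} [CommRing R] {m r p s : Type*}

theorem sub_kronecker {q : Type*} (A₁ A₂ : Matrix m r R) (B : Matrix p q R) :
    (A₁ - A₂) ⊗ₖ B = A₁ ⊗ₖ B - A₂ ⊗ₖ B := by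
  ext ⟨_, _⟩ ⟨_, _⟩
  simp only [kroneckerMap_apply, sub_apply, sub_mul]

theorem kronecker_sub {q : Type*} (A : Matrix m r R) (B₁ B₂ : Matrix p q R) :
    A ⊗ₖ (B₁ - B₂) = A ⊗ₖ B₁ - A ⊗ₖ B₂ := by
  ext ⟨_, _⟩ ⟨_, _⟩
  simp only [kroneckerMap_apply, sub_apply, mul_sub]

variable [Fintype m] [Fintype r] [DecidableEq m]

theorem one_sub_mul_mulVec_of_mulVec_eq_zero (A : Matrix m r R) {B : Matrix r m R}
    {v : m → R} (h : B *ᵥ v = 0) : (1 - A * B) *ᵥ v = v := by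
  rw [sub_mulVec, one_mulVec, ← mulVec_mulVec, h, mulVec_zero, sub_zero]

variable [DecidableEq r]

theorem mul_one_sub_mul_eq_zero {A : Matrix m r R} {B : Matrix r m R} (h : B * A = 1) :
    B * (1 - A * B) = 0 := by
  rw [Matrix.mul_sub, Matrix.mul_one, ← Matrix.mul_assoc, h, Matrix.one_mul, sub_self]

variable [Fintype p] [Fintype s] [DecidableEq p] [DecidableEq s]

theorem one_sub_mul_kronecker_one_sub_mul_mulVec_eq_self_iff
    {A₁ : Matrix m r R} {B₁ : Matrix r m R} {A₂ : Matrix p s R} {B₂ : Matrix s p R}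
    (h₁ : B₁ * A₁ = 1) (h₂ : B₂ * A₂ = 1) (v : m × p → R) :
    ((1 - A₁ * B₁) ⊗ₖ (1 - A₂ * B₂)) *ᵥ v = v ↔
      (B₁ ⊗ₖ (1 : Matrix p p R)) *ᵥ v = 0 ∧ ((1 : Matrix m m R) ⊗ₖ B₂) *ᵥ v = 0 := by
  constructor
  · intro hv
    constructor
    · rw [← hv, mulVec_mulVec, ← mul_kronecker_mul, mul_one_sub_mul_eq_zero h₁,
        zero_kronecker, zero_mulVec]
    · rw [← hv, mulVec_mulVec, ← mul_kronecker_mul, mul_one_sub_mul_eq_zero h₂,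
        kronecker_zero, zero_mulVec]
  · rintro ⟨h₁v, h₂v⟩
    have hfactor : (1 - A₁ * B₁) ⊗ₖ (1 - A₂ * B₂) =
        (1 - (A₁ ⊗ₖ (1 : Matrix p p R)) * (B₁ ⊗ₖ (1 : Matrix p p R))) *
          (1 - ((1 : Matrix m m R) ⊗ₖ A₂) * ((1 : Matrix m m R) ⊗ₖ B₂)) := by
      rw [← mul_kronecker_mul, ← mul_kronecker_mul, Matrix.mul_one, Matrix.one_mul,
        ← one_kronecker_one, ← sub_kronecker, ← kronecker_sub, ← mul_kronecker_mul,
        Matrix.mul_one, Matrix.one_mul]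
    rw [hfactor, ← mulVec_mulVec, one_sub_mul_mulVec_of_mulVec_eq_zero _ h₂v,
      one_sub_mul_mulVec_of_mulVec_eq_zero _ h₁v]

end Matrix

theorem transpose_mul_mul_mul_inv_eq_one {R n k : Type*} [CommRing R] [Fintype n] [Fintype k]
    [DecidableEq k] {W : Matrix n n R} {U : Matrix n k R} (hU : IsUnit (Uᵀ * W * U)) :
    Uᵀ * (W * U * (Uᵀ * W * U)⁻¹) = 1 := by
  rw [← Matrix.mul_assoc, ← Matrix.mul_assoc]
  exact mul_nonsing_inv _ ((isUnit_iff_isUnit_det _).mp hU)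

theorem stmt_5_general {n na T k : ℕ}
    (W : Matrix (Fin n) (Fin n) ℝ)
    (U : Matrix (Fin n) (Fin na) ℝ) (hU : IsUnit (Uᵀ * W * U))
    (Ω : Matrix (Fin T) (Fin T) ℝ)
    (Z : Matrix (Fin T) (Fin k) ℝ) (hZ : IsUnit (Zᵀ * Ω * Z))
    (Mcs : Matrix (Fin n) (Fin n) ℝ) (hMcs : Mcs = 1 - W * U * (Uᵀ * W * U)⁻¹ * Uᵀ)
    (Mte : Matrix (Fin T) (Fin T) ℝ) (hMte : Mte = 1 - Ω * Z * (Zᵀ * Ω * Z)⁻¹ * Zᵀ)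
    (v : Fin n × Fin T → ℝ) :
    (Mcs ⊗ₖ Mte).mulVec v = v ↔
      ((Uᵀ ⊗ₖ (1 : Matrix (Fin T) (Fin T) ℝ)).mulVec v = 0 ∧
        (((1 : Matrix (Fin n) (Fin n) ℝ)) ⊗ₖ Zᵀ).mulVec v = 0) := by
  subst hMcs hMte
  exact one_sub_mul_kronecker_one_sub_mul_mulVec_eq_self_iff
    (transpose_mul_mul_mul_inv_eq_one hU) (transpose_mul_mul_mul_inv_eq_one hZ) v

/-- a vector v is a fixed point of the Kronecker projector
M_cs ⊗ M_te iff it is cross-temporally coherent, i.e. (Uᵀ ⊗ I_T)v = 0 and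
(I_n ⊗ Zᵀ)v = 0. -/
theorem stmt_5 {n na T k : ℕ}
    (W : Matrix (Fin n) (Fin n) ℝ) (hW : W.PosDef)
    (U : Matrix (Fin n) (Fin na) ℝ) (hU : IsUnit (Uᵀ * W * U))
    (Ω : Matrix (Fin T) (Fin T) ℝ) (hΩ : Ω.PosDef)
    (Z : Matrix (Fin T) (Fin k) ℝ) (hZ : IsUnit (Zᵀ * Ω * Z))
    (Mcs : Matrix (Fin n) (Fin n) ℝ) (hMcs : Mcs = 1 - W * U * (Uᵀ * W * U)⁻¹ * Uᵀ)
    (Mte : Matrix (Fin T) (Fin T) ℝ) (hMte : Mte = 1 - Ω * Z * (Zᵀ * Ω * Z)⁻¹ * Zᵀ)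
    (v : Fin n × Fin T → ℝ) :
    (Mcs ⊗ₖ Mte).mulVec v = v ↔
      ((Uᵀ ⊗ₖ (1 : Matrix (Fin T) (Fin T) ℝ)).mulVec v = 0 ∧
        (((1 : Matrix (Fin n) (Fin n) ℝ)) ⊗ₖ Zᵀ).mulVec v = 0) :=
  stmt_5_general W U hU Ω Z hZ Mcs hMcs Mte hMte v
end

section
/- An n×T real matrix Y satisfies both the cross-sectional constraints UᵀY = 0 and the temporal constraints YZ = 0 if and only if Y lies in the linear span of the rank-one matrices s·tᵀ with s ∈ ℝⁿ, t ∈ ℝ^T satisfying Uᵀs = 0 and Zᵀt = 0. Equivalently, the cross-temporally coherent subspace is the tensor product of the cross-sectionally coherent subspace ker(Uᵀ) and the temporally coherent subspace ker(Zᵀ). -/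
/-!
If every column of `Y` lies in `S` and every row in `T`, expand each column in a basis `(bᵢ)` of
`S`. The `i`-th coordinate is a linear functional `v ↦ v ⬝ᵥ wᵢ` (extend it from `S` to the whole
space), so the coefficient vector of `bᵢ` is `wᵢ ᵥ* Y`, a combination of rows of `Y`, hence in
`T`: thus `Y = ∑ᵢ bᵢ (wᵢ ᵥ* Y)ᵀ`. With `S = ker Uᵀ` and `T = ker Zᵀ` this is the theorem.
-/

open Matrix Submodule

namespace Matrix

variable {l m n α : Type*} [Fintype m]

theorem mul_eq_zero_iff_forall_mulVec_transpose [NonUnitalNonAssocSemiring α]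
    (A : Matrix l m α) (B : Matrix m n α) : A * B = 0 ↔ ∀ j, A *ᵥ Bᵀ j = 0 := by
  simp only [← Matrix.ext_iff, funext_iff, zero_apply, Pi.zero_apply]
  exact forall_comm

theorem mul_eq_zero_iff_forall_transpose_mulVec [CommSemiring α]
    (A : Matrix l m α) (B : Matrix m n α) : A * B = 0 ↔ ∀ i, Bᵀ *ᵥ A i = 0 := by
  simp only [mulVec_transpose, ← Matrix.ext_iff, funext_iff, zero_apply, Pi.zero_apply]
  rfl

end Matrix

section CommSemiring

variable {R m n : Type*} [CommSemiring R] {S : Submodule R (m → R)} {T : Submodule R (n → R)}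

theorem forall_mem_of_mem_span_image2_vecMulVec {Y : Matrix m n R}
    (hY : Y ∈ span R (Set.image2 vecMulVec S T)) : (∀ j, Yᵀ j ∈ S) ∧ ∀ i, Y i ∈ T := by
  induction hY using span_induction with
  | mem A hA =>
    obtain ⟨s, hs, t, ht, rfl⟩ := hA
    rw [transpose_vecMulVec]
    exact ⟨fun j => S.smul_mem (t j) hs, fun i => T.smul_mem (s i) ht⟩
  | zero => exact ⟨fun _ => S.zero_mem, fun _ => T.zero_mem⟩
  | add A B _ _ hA hB =>
    exact ⟨fun j => S.add_mem (hA.1 j) (hB.1 j), fun i => T.add_mem (hA.2 i) (hB.2 i)⟩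
  | smul c A _ hA => exact ⟨fun j => S.smul_mem c (hA.1 j), fun i => T.smul_mem c (hA.2 i)⟩

end CommSemiring

section Field

variable {K m n : Type*} [Field K] [Fintype m] {S : Submodule K (m → K)} {T : Submodule K (n → K)}

theorem Submodule.exists_dotProduct_eq_repr {ι : Type*} (b : Module.Basis ι K S) (i : ι) :
    ∃ w : m → K, ∀ v : S, (v : m → K) ⬝ᵥ w = b.repr v i := by
  classical
  obtain ⟨φ, hφ⟩ := LinearMap.exists_extend (b.coord i)
  refine ⟨fun x => φ fun y => if x = y then 1 else 0, fun v => ?_⟩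
  rw [← b.coord_apply, ← hφ, LinearMap.comp_apply, LinearMap.pi_apply_eq_sum_univ]
  rfl

theorem mem_span_image2_vecMulVec_of_forall_mem {Y : Matrix m n K}
    (hcol : ∀ j, Yᵀ j ∈ S) (hrow : ∀ i, Y i ∈ T) : Y ∈ span K (Set.image2 vecMulVec S T) := by
  let b := Module.finBasis K S
  choose w hw using S.exists_dotProduct_eq_repr b
  have hY : Y = ∑ i, vecMulVec (b i) (w i ᵥ* Y) := by
    ext x j
    have hcol_repr := congrFun (congrArg Subtype.val (b.sum_repr ⟨Yᵀ j, hcol j⟩)) x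
    simp only [coe_sum, coe_smul, Finset.sum_apply, Pi.smul_apply, smul_eq_mul] at hcol_repr
    simp only [Matrix.sum_apply, vecMulVec_apply]
    refine hcol_repr.symm.trans (Finset.sum_congr rfl fun i _ => ?_)
    rw [← hw, mul_comm, dotProduct_comm]
    rfl
  rw [hY]
  refine sum_mem fun i _ => subset_span ⟨b i, (b i).2, w i ᵥ* Y, ?_, rfl⟩
  rw [vecMul_eq_sum]
  exact sum_mem fun x _ => T.smul_mem _ (hrow x)

theorem mem_span_image2_vecMulVec_iff {Y : Matrix m n K} :
    Y ∈ span K (Set.image2 vecMulVec S T) ↔ (∀ j, Yᵀ j ∈ S) ∧ ∀ i, Y i ∈ T :=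
  ⟨forall_mem_of_mem_span_image2_vecMulVec,
    fun h => mem_span_image2_vecMulVec_of_forall_mem h.1 h.2⟩

end Field

/-- an n×T matrix Y is cross-temporally coherent (UᵀY = 0 and
YZ = 0) iff it lies in the span of the rank-one matrices s·tᵀ with Uᵀs = 0 and
Zᵀt = 0, i.e. the coherent subspace is the tensor product ker(Uᵀ) ⊗ ker(Zᵀ). -/
theorem stmt_6 {n na T k : ℕ}
    (U : Matrix (Fin n) (Fin na) ℝ) (Z : Matrix (Fin T) (Fin k) ℝ)
    (Y : Matrix (Fin n) (Fin T) ℝ) :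
    (Uᵀ * Y = 0 ∧ Y * Z = 0) ↔
      Y ∈ Submodule.span ℝ
        {A : Matrix (Fin n) (Fin T) ℝ |
          ∃ (s : Fin n → ℝ) (t : Fin T → ℝ),
            Uᵀ.mulVec s = 0 ∧ Zᵀ.mulVec t = 0 ∧ A = vecMulVec s t} := by
  have hrank_one : {A : Matrix (Fin n) (Fin T) ℝ | ∃ (s : Fin n → ℝ) (t : Fin T → ℝ),
      Uᵀ.mulVec s = 0 ∧ Zᵀ.mulVec t = 0 ∧ A = vecMulVec s t} =
      Set.image2 vecMulVec (LinearMap.ker (mulVecLin Uᵀ)) (LinearMap.ker (mulVecLin Zᵀ)) := by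
    ext
    simp only [Set.mem_ofPred_eq, Set.mem_image2, SetLike.mem_coe, LinearMap.mem_ker,
      mulVecLin_apply, exists_and_left, eq_comm]
  rw [hrank_one, mem_span_image2_vecMulVec_iff, mul_eq_zero_iff_forall_mulVec_transpose,
    mul_eq_zero_iff_forall_transpose_mulVec]
  simp only [LinearMap.mem_ker, mulVecLin_apply]
end

section
/- For an n×T real matrix Y, the two-step reconciled matrix vanishes, M_cs · Y · M_teᵀ = 0, if and only if there exist an n_a×T matrix A and an n×k matrix B such that Y = W·U·A + B·Zᵀ·Ω (where Ω is symmetric). That is, the kernel of the map Y ↦ M_cs·Y·M_teᵀ equals the sum of the column space of WU (acting on rows) and the column space of ΩZ (acting on columns). -/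
/-!
Both `M_cs` and `M_teᵀ` are oblique projectors of the form `P = 1 - X (L X)⁻¹ L`, which kill
`X` on the right and `L` on the left. Hence `M_cs (W U A + B Zᵀ Ω) M_teᵀ = 0`. Conversely
`Y - P Y Q = (1 - P) Y + P Y (1 - Q)`, and `1 - P`, `1 - Q` factor through `X = W U` and
`R = Zᵀ Ω`, which writes `Y` in the required form whenever `P Y Q = 0`.
-/

open Matrix

namespace Matrix

variable {m p q : Type*} [Fintype m] [DecidableEq m] [Fintype p] [DecidableEq p]
  {R : Type*} [CommRing R]

/-- The projector with kernel the column space of `X` and image the kernel of `L`. -/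
noncomputable def complProj (X : Matrix m p R) (L : Matrix p m R) : Matrix m m R :=
  1 - X * (L * X)⁻¹ * L

theorem complProj_mul_self {X : Matrix m p R} {L : Matrix p m R} (h : IsUnit (L * X)) :
    complProj X L * X = 0 := by
  have hdet := (isUnit_iff_isUnit_det _).mp h
  rw [complProj, Matrix.sub_mul, Matrix.one_mul, Matrix.mul_assoc _ L, nonsing_inv_mul_cancel_right _ _ hdet,
    sub_self]

theorem mul_complProj {X : Matrix m p R} {L : Matrix p m R} (h : IsUnit (L * X)) :
    L * complProj X L = 0 := by
  have hdet := (isUnit_iff_isUnit_det _).mp h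
  rw [complProj, Matrix.mul_sub, Matrix.mul_one, ← Matrix.mul_assoc, ← Matrix.mul_assoc,
    mul_nonsing_inv _ hdet, Matrix.one_mul, sub_self]

theorem one_sub_complProj (X : Matrix m p R) (L : Matrix p m R) :
    1 - complProj X L = X * ((L * X)⁻¹ * L) := by
  rw [complProj, sub_sub_cancel, Matrix.mul_assoc]

theorem transpose_complProj (X : Matrix m p R) (L : Matrix p m R) :
    (complProj X L)ᵀ = complProj Lᵀ Xᵀ := by
  simp only [complProj, transpose_sub, transpose_one, transpose_mul, transpose_nonsing_inv,
    Matrix.mul_assoc]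

variable [Fintype q] [DecidableEq q] {n : Type*} [Fintype n] [DecidableEq n]

theorem complProj_mul_mul_complProj_eq_zero_iff {X : Matrix m p R} {L : Matrix p m R}
    {S : Matrix n q R} {K : Matrix q n R} (hX : IsUnit (L * X)) (hS : IsUnit (K * S))
    (Y : Matrix m n R) :
    complProj X L * Y * complProj S K = 0 ↔
      ∃ (A : Matrix p n R) (B : Matrix m q R), Y = X * A + B * K := by
  constructor
  · intro h
    refine ⟨(L * X)⁻¹ * L * Y, complProj X L * Y * S * (K * S)⁻¹, ?_⟩
    have hsplit : Y = (1 - complProj X L) * Y + complProj X L * Y * (1 - complProj S K)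
        + complProj X L * Y * complProj S K := by
      simp only [Matrix.sub_mul, Matrix.mul_sub, Matrix.one_mul, Matrix.mul_one]
      abel
    rw [h, add_zero, one_sub_complProj, one_sub_complProj] at hsplit
    exact hsplit.trans (by simp only [Matrix.mul_assoc])
  · rintro ⟨A, B, rfl⟩
    calc complProj X L * (X * A + B * K) * complProj S K
        = complProj X L * X * (A * complProj S K) + complProj X L * B * (K * complProj S K) := by
          simp only [Matrix.mul_add, Matrix.add_mul, Matrix.mul_assoc]
      _ = 0 := by
          rw [complProj_mul_self hX, mul_complProj hS, Matrix.zero_mul, Matrix.mul_zero, add_zero]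

end Matrix

theorem stmt_7_general {n na T k : ℕ}
    (W : Matrix (Fin n) (Fin n) ℝ)
    (U : Matrix (Fin n) (Fin na) ℝ) (hU : IsUnit (Uᵀ * W * U))
    (Ω : Matrix (Fin T) (Fin T) ℝ) (hΩ : Ω.PosDef)
    (Z : Matrix (Fin T) (Fin k) ℝ) (hZ : IsUnit (Zᵀ * Ω * Z))
    (Mcs : Matrix (Fin n) (Fin n) ℝ) (hMcs : Mcs = 1 - W * U * (Uᵀ * W * U)⁻¹ * Uᵀ)
    (Mte : Matrix (Fin T) (Fin T) ℝ) (hMte : Mte = 1 - Ω * Z * (Zᵀ * Ω * Z)⁻¹ * Zᵀ)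
    (Y : Matrix (Fin n) (Fin T) ℝ) :
    Mcs * Y * Mteᵀ = 0 ↔
      ∃ (A : Matrix (Fin na) (Fin T) ℝ) (B : Matrix (Fin n) (Fin k) ℝ),
        Y = W * U * A + B * Zᵀ * Ω := by
  have hΩsymm : Ωᵀ = Ω := hΩ.isHermitian
  have hMcs_eq : Mcs = complProj (W * U) Uᵀ := by
    rw [hMcs, complProj, Matrix.mul_assoc Uᵀ]
  have hMteT_eq : Mteᵀ = complProj Z (Zᵀ * Ω) := by
    have hMte_eq : Mte = complProj (Ω * Z) Zᵀ := by
      rw [hMte, complProj, Matrix.mul_assoc Zᵀ]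
    rw [hMte_eq, transpose_complProj, transpose_transpose, transpose_mul, hΩsymm]
  rw [Matrix.mul_assoc Uᵀ] at hU
  rw [hMcs_eq, hMteT_eq, complProj_mul_mul_complProj_eq_zero_iff hU hZ]
  simp only [Matrix.mul_assoc]

/-- M_cs · Y · M_teᵀ = 0 iff Y = W·U·A + B·Zᵀ·Ω for some matrices
A, B; i.e. the kernel of Y ↦ M_cs·Y·M_teᵀ is the sum of the column space of WU
(acting on rows) and the column space of ΩZ (acting on columns). -/
theorem stmt_7 {n na T k : ℕ}
    (W : Matrix (Fin n) (Fin n) ℝ) (hW : W.PosDef)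
    (U : Matrix (Fin n) (Fin na) ℝ) (hU : IsUnit (Uᵀ * W * U))
    (Ω : Matrix (Fin T) (Fin T) ℝ) (hΩ : Ω.PosDef)
    (Z : Matrix (Fin T) (Fin k) ℝ) (hZ : IsUnit (Zᵀ * Ω * Z))
    (Mcs : Matrix (Fin n) (Fin n) ℝ) (hMcs : Mcs = 1 - W * U * (Uᵀ * W * U)⁻¹ * Uᵀ)
    (Mte : Matrix (Fin T) (Fin T) ℝ) (hMte : Mte = 1 - Ω * Z * (Zᵀ * Ω * Z)⁻¹ * Zᵀ)
    (Y : Matrix (Fin n) (Fin T) ℝ) :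
    Mcs * Y * Mteᵀ = 0 ↔
      ∃ (A : Matrix (Fin na) (Fin T) ℝ) (B : Matrix (Fin n) (Fin k) ℝ),
        Y = W * U * A + B * Zᵀ * Ω :=
  stmt_7_general W U hU Ω hΩ Z hZ Mcs hMcs Mte hMte Y
end

section
/- Let W be an n×n real symmetric positive definite matrix, S an n×n_b real matrix with Sᵀ W⁻¹ S invertible, and U an n×n_a real matrix with Uᵀ W U invertible, such that Uᵀ S = 0 and the kernel of Uᵀ equals the column space of S. Then the two standard representations of the reconciliation projector coincide: S·(Sᵀ W⁻¹ S)⁻¹·Sᵀ·W⁻¹ = I_n − W·U·(Uᵀ W U)⁻¹·Uᵀ. -/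
open Matrix

/-- under UᵀS = 0 and ker(Uᵀ) = col(S), the regression form and
the projection form of the reconciliation projector coincide:
S(SᵀW⁻¹S)⁻¹SᵀW⁻¹ = I − WU(UᵀWU)⁻¹Uᵀ. -/
theorem stmt_10 {n nb na : ℕ}
    (W : Matrix (Fin n) (Fin n) ℝ) (hW : W.PosDef)
    (S : Matrix (Fin n) (Fin nb) ℝ) (hS : IsUnit (Sᵀ * W⁻¹ * S))
    (U : Matrix (Fin n) (Fin na) ℝ) (hU : IsUnit (Uᵀ * W * U))
    (hUS : Uᵀ * S = 0)
    (hker : LinearMap.ker (Uᵀ).mulVecLin = LinearMap.range S.mulVecLin) :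
    S * (Sᵀ * W⁻¹ * S)⁻¹ * Sᵀ * W⁻¹ = 1 - W * U * (Uᵀ * W * U)⁻¹ * Uᵀ := by
  have hWdet : IsUnit W.det := isUnit_iff_ne_zero.mpr hW.det_pos.ne'
  have hWinv : W⁻¹ * W = 1 := Matrix.nonsing_inv_mul W hWdet
  have hMdet : IsUnit (Sᵀ * W⁻¹ * S).det := (Matrix.isUnit_iff_isUnit_det _).mp hS
  have hNdet : IsUnit (Uᵀ * W * U).det := (Matrix.isUnit_iff_isUnit_det _).mp hU
  set M := Sᵀ * W⁻¹ * S with hM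
  set N := Uᵀ * W * U with hN
  set P := S * M⁻¹ * Sᵀ * W⁻¹ with hP
  set Q := (1 : Matrix (Fin n) (Fin n) ℝ) - W * U * N⁻¹ * Uᵀ with hQ
  have hSU : Sᵀ * U = 0 := by
    have := congrArg Matrix.transpose hUS
    simpa [Matrix.transpose_mul] using this
  have hPS : P * S = S := by
    rw [hP]
    simp only [Matrix.mul_assoc]
    rw [show Sᵀ * (W⁻¹ * S) = M by rw [hM, Matrix.mul_assoc],
      Matrix.nonsing_inv_mul M hMdet, Matrix.mul_one]
  have hPWU : P * (W * U) = 0 := by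
    rw [hP]
    simp only [Matrix.mul_assoc]
    rw [← Matrix.mul_assoc W⁻¹ W U, hWinv, Matrix.one_mul, hSU]
    simp
  have hPQ : P * Q = P := by
    rw [hQ, Matrix.mul_sub, Matrix.mul_one]
    have : P * (W * U * N⁻¹ * Uᵀ) = 0 := by
      rw [show W * U * N⁻¹ * Uᵀ = (W * U) * (N⁻¹ * Uᵀ) by
        simp only [Matrix.mul_assoc], ← Matrix.mul_assoc, hPWU, Matrix.zero_mul]
    rw [this, sub_zero]
  have hUQ : Uᵀ * Q = 0 := by
    rw [hQ, Matrix.mul_sub, Matrix.mul_one]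
    rw [show Uᵀ * (W * U * N⁻¹ * Uᵀ) = (Uᵀ * W * U) * (N⁻¹ * Uᵀ) by
      simp only [Matrix.mul_assoc], ← hN, ← Matrix.mul_assoc,
      Matrix.mul_nonsing_inv N hNdet, Matrix.one_mul, sub_self]
  have key : ∀ x : Fin n → ℝ, P.mulVec x = Q.mulVec x := by
    intro x
    have h0 : (Uᵀ).mulVec (Q.mulVec x) = 0 := by
      rw [Matrix.mulVec_mulVec, hUQ, Matrix.zero_mulVec]
    have hmem : Q.mulVec x ∈ LinearMap.range S.mulVecLin := by
      rw [← hker]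
      exact LinearMap.mem_ker.mpr (by rw [Matrix.mulVecLin_apply]; exact h0)
    obtain ⟨b, hb⟩ := hmem
    simp only [Matrix.mulVecLin_apply] at hb
    calc P.mulVec x = (P * Q).mulVec x := by rw [hPQ]
      _ = P.mulVec (Q.mulVec x) := by rw [Matrix.mulVec_mulVec]
      _ = P.mulVec (S.mulVec b) := by rw [hb]
      _ = (P * S).mulVec b := by rw [Matrix.mulVec_mulVec]
      _ = S.mulVec b := by rw [hPS]
      _ = Q.mulVec x := hb
  ext i j
  have := congrFun (key (Pi.single j 1)) i
  simpa [Matrix.mulVec_single] using this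
end

section
/- Suppose Uᵀ S = 0, ker(Uᵀ) equals the column space of S, Zᵀ R = 0, and ker(Zᵀ) equals the column space of R, with SᵀW⁻¹S, UᵀWU, RᵀΩ⁻¹R and ZᵀΩZ all invertible. Then for any n×T base forecast matrix Ŷ, the heuristic cross-temporal reconciliation that first applies temporal reconciliation in regression form to each series and then cross-sectional reconciliation in regression form at each temporal granularity coincides with the sequential projector form: S·(SᵀW⁻¹S)⁻¹·SᵀW⁻¹ · Ŷ · (R·(RᵀΩ⁻¹R)⁻¹·RᵀΩ⁻¹)ᵀ = M_cs · Ŷ · M_teᵀ, where M_cs = I_n − WU(UᵀWU)⁻¹Uᵀ and M_te = I_T − ΩZ(ZᵀΩZ)⁻¹Zᵀ. Hence, when the cross-sectional covariance matrix is the same at every temporal granularity and the temporal covariance matrix is the same for every series, the heuristic's level-wise combination matrices are all equal, its final averaging step is redundant, and its output does not depend on the order of the two unidimensional phases. -/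
open Matrix

lemma proj_eq {n nb na : ℕ}
    (W : Matrix (Fin n) (Fin n) ℝ) (hW : W.PosDef)
    (S : Matrix (Fin n) (Fin nb) ℝ) (hS : IsUnit (Sᵀ * W⁻¹ * S))
    (U : Matrix (Fin n) (Fin na) ℝ) (hU : IsUnit (Uᵀ * W * U))
    (hUS : Uᵀ * S = 0)
    (hkerU : LinearMap.ker (Uᵀ).mulVecLin = LinearMap.range S.mulVecLin) :
    S * (Sᵀ * W⁻¹ * S)⁻¹ * Sᵀ * W⁻¹ = 1 - W * U * (Uᵀ * W * U)⁻¹ * Uᵀ := by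
  set P := S * (Sᵀ * W⁻¹ * S)⁻¹ * Sᵀ * W⁻¹ with hP
  set M := (1 : Matrix (Fin n) (Fin n) ℝ) - W * U * (Uᵀ * W * U)⁻¹ * Uᵀ with hM
  have hWdet : IsUnit W.det := isUnit_iff_ne_zero.mpr (ne_of_gt hW.det_pos)
  have hWinv : W⁻¹ * W = 1 := Matrix.nonsing_inv_mul W hWdet
  have hSdet : IsUnit (Sᵀ * W⁻¹ * S).det := (Matrix.isUnit_iff_isUnit_det _).mp hS
  have hAinv : (Sᵀ * W⁻¹ * S)⁻¹ * (Sᵀ * W⁻¹ * S) = 1 := Matrix.nonsing_inv_mul _ hSdet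
  have hUdet : IsUnit (Uᵀ * W * U).det := (Matrix.isUnit_iff_isUnit_det _).mp hU
  have hBinv : (Uᵀ * W * U) * (Uᵀ * W * U)⁻¹ = 1 := Matrix.mul_nonsing_inv _ hUdet
  -- P * S = S
  have hPS : P * S = S := by
    calc P * S = S * ((Sᵀ * W⁻¹ * S)⁻¹ * (Sᵀ * W⁻¹ * S)) := by
          simp only [hP, Matrix.mul_assoc]
      _ = S := by rw [hAinv, Matrix.mul_one]
  -- Uᵀ * M = 0
  have hUM : Uᵀ * M = 0 := by
    have h1 : Uᵀ * (W * U * (Uᵀ * W * U)⁻¹ * Uᵀ) = Uᵀ := by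
      calc Uᵀ * (W * U * (Uᵀ * W * U)⁻¹ * Uᵀ)
          = (Uᵀ * W * U) * ((Uᵀ * W * U)⁻¹ * Uᵀ) := by simp only [Matrix.mul_assoc]
        _ = Uᵀ := by rw [← Matrix.mul_assoc, hBinv, Matrix.one_mul]
    rw [hM, Matrix.mul_sub, Matrix.mul_one, h1, sub_self]
  -- P * M = M
  have hPM_M : P * M = M := by
    have hcol : ∀ x : Fin n → ℝ, (P * M).mulVec x = M.mulVec x := by
      intro x
      have hker : M.mulVec x ∈ LinearMap.ker (Uᵀ).mulVecLin := by
        show Uᵀ.mulVec (M.mulVec x) = 0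
        rw [Matrix.mulVec_mulVec, hUM, Matrix.zero_mulVec]
      rw [hkerU] at hker
      obtain ⟨c, hc⟩ := hker
      simp only [Matrix.mulVecLin_apply] at hc
      rw [← Matrix.mulVec_mulVec, ← hc, Matrix.mulVec_mulVec, hPS]
    ext i j
    have := congrFun (hcol (Pi.single j 1)) i
    simpa [Matrix.mulVec_single] using this
  -- P * M = P
  have hPWU : P * (W * U) = 0 := by
    have hSU : Sᵀ * U = 0 := by
      have := congrArg Matrix.transpose hUS
      simpa [Matrix.transpose_mul] using this
    calc P * (W * U) = S * (Sᵀ * W⁻¹ * S)⁻¹ * (Sᵀ * (W⁻¹ * (W * U))) := by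
          simp only [hP, Matrix.mul_assoc]
      _ = S * (Sᵀ * W⁻¹ * S)⁻¹ * (Sᵀ * U) := by
          rw [← Matrix.mul_assoc W⁻¹ W U, hWinv, Matrix.one_mul]
      _ = 0 := by rw [hSU, Matrix.mul_zero]
  have hPM_P : P * M = P := by
    rw [hM, Matrix.mul_sub, Matrix.mul_one]
    have : P * (W * U * (Uᵀ * W * U)⁻¹ * Uᵀ) = 0 := by
      calc P * (W * U * (Uᵀ * W * U)⁻¹ * Uᵀ)
          = (P * (W * U)) * ((Uᵀ * W * U)⁻¹ * Uᵀ) := by simp only [Matrix.mul_assoc]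
        _ = 0 := by rw [hPWU, Matrix.zero_mul]
    rw [this, sub_zero]
  rw [← hPM_M, hPM_P]

/-- under the stated coherence conditions, the heuristic
cross-temporal reconciliation in regression form (temporal then cross-sectional,
with constant covariance matrices) coincides with the sequential projector form:
S(SᵀW⁻¹S)⁻¹SᵀW⁻¹ · Ŷ · (R(RᵀΩ⁻¹R)⁻¹RᵀΩ⁻¹)ᵀ = M_cs · Ŷ · M_teᵀ, so the
heuristic's final averaging step is redundant and its output is
order-independent. -/
theorem stmt_11 {n nb na T m k : ℕ}
    (W : Matrix (Fin n) (Fin n) ℝ) (hW : W.PosDef)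
    (S : Matrix (Fin n) (Fin nb) ℝ) (hS : IsUnit (Sᵀ * W⁻¹ * S))
    (U : Matrix (Fin n) (Fin na) ℝ) (hU : IsUnit (Uᵀ * W * U))
    (hUS : Uᵀ * S = 0)
    (hkerU : LinearMap.ker (Uᵀ).mulVecLin = LinearMap.range S.mulVecLin)
    (Ω : Matrix (Fin T) (Fin T) ℝ) (hΩ : Ω.PosDef)
    (R : Matrix (Fin T) (Fin m) ℝ) (hR : IsUnit (Rᵀ * Ω⁻¹ * R))
    (Z : Matrix (Fin T) (Fin k) ℝ) (hZ : IsUnit (Zᵀ * Ω * Z))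
    (hZR : Zᵀ * R = 0)
    (hkerZ : LinearMap.ker (Zᵀ).mulVecLin = LinearMap.range R.mulVecLin)
    (Mcs : Matrix (Fin n) (Fin n) ℝ) (hMcs : Mcs = 1 - W * U * (Uᵀ * W * U)⁻¹ * Uᵀ)
    (Mte : Matrix (Fin T) (Fin T) ℝ) (hMte : Mte = 1 - Ω * Z * (Zᵀ * Ω * Z)⁻¹ * Zᵀ)
    (Yhat : Matrix (Fin n) (Fin T) ℝ) :
    (S * (Sᵀ * W⁻¹ * S)⁻¹ * Sᵀ * W⁻¹) * Yhat * (R * (Rᵀ * Ω⁻¹ * R)⁻¹ * Rᵀ * Ω⁻¹)ᵀ =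
      Mcs * Yhat * Mteᵀ := by
  rw [proj_eq W hW S hS U hU hUS hkerU, proj_eq Ω hΩ R hR Z hZ hZR hkerZ, ← hMcs, ← hMte]
end
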